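/- arXiv:1502.03571 — 2 statements merged into one kernel-verified Lean document; each statement's English description precedes it below -/
import Mathlib

section
/- In the setting of the preconditioned weighted SGD algorithm for ℓ₁ regression (A ∈ ℝ^{n×d} full column rank, b ∈ ℝ^n, f(x) = ‖Ax−b‖₁, Z ⊆ ℝ^d nonempty closed convex, R invertible with U = AR⁻¹ (α,β,1)-conditioned, leverage-score sampling probabilities p_i = λ_i/Σ_j λ_j with (1−γ)‖U_i‖₁ ≤ λ_i ≤ (1+γ)‖U_i‖₁, 0 ≤ γ < 1, preconditioner F invertible, H = (FFᵀ)⁻¹, update x_{t+1} = argmin_{x∈Z}[η c_t A_{ξ_t}x + ½‖x_t−x‖_H²] with c_t = sgn(A_{ξ_t}x_t − b_{ξ_t})/p_{ξ_t}, output x̄ the average of x₀,…,x_T), suppose f(x*) > 0 for a minimizer x* of f over Z and x* ≠ 0. Then there exists a step-size η > 0 such that whenever T ≥ d·(αβ)²·(|RF|₁|(RF)⁻¹|₁)²·c₁²c₂c₃²/ε², the output satisfies (E[f(x̄)] − f(x*))/f(x*) ≤ ε, where c₁ = (1+γ)/(1−γ), c₂ = ‖x*−x₀‖_H²/‖x*‖_H²,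 c₃ = ‖Ax*‖₁/f(x*), and |M|₁ denotes the entrywise 1-norm. -/
open Matrix Finset

/-- The `ℓ₁` norm of a vector. -/
noncomputable def l1Norm {m : ℕ} (v : Fin m → ℝ) : ℝ := ∑ i, |v i|

/-- The `ℓ_∞` norm of a vector. -/
noncomputable def linfNorm {m : ℕ} (v : Fin m → ℝ) : ℝ := ⨆ i, |v i|

/-- The entrywise `ℓ₁` norm of a matrix: `|M|₁ = ∑ i j, |M i j|`. -/
noncomputable def entry1Norm {m k : ℕ} (M : Matrix (Fin m) (Fin k) ℝ) : ℝ :=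
  ∑ i, ∑ j, |M i j|

/-- `U` is `(α, β, 1)`-conditioned: `|U|₁ ≤ α` and `‖x‖_∞ ≤ β ‖U x‖₁` for all `x`
(the constant `β` being nonnegative). -/
def IsConditioned1 {m k : ℕ} (α β : ℝ) (U : Matrix (Fin m) (Fin k) ℝ) : Prop :=
  0 ≤ β ∧ entry1Norm U ≤ α ∧ ∀ x : Fin k → ℝ, linfNorm x ≤ β * l1Norm (U *ᵥ x)

/-- The squared ellipsoidal norm `‖v‖_H² = vᵀ H v`. -/
noncomputable def normHsq {k : ℕ} (H : Matrix (Fin k) (Fin k) ℝ) (v : Fin k → ℝ) : ℝ :=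
  v ⬝ᵥ (H *ᵥ v)

/-! ### Auxiliary lemmas -/

lemma sLQ_nonneg (Q L : ℝ) (h : ∀ s : ℝ, 0 < s → s ≤ 1 → 0 ≤ s * L + s^2 * Q) (hQ : 0 ≤ Q) :
    0 ≤ L := by
  by_contra hL
  push_neg at hL
  have hQ1 : (0:ℝ) < Q + 1 := by linarith
  have hs : ∀ s : ℝ, 0 < s → s ≤ 1 → -(s*Q) ≤ L := fun s h1 h2 => by nlinarith [h s h1 h2]
  rcases le_or_gt ((-L)/(Q+1)) 1 with h1 | h1
  · have hpos : 0 < (-L)/(Q+1) := div_pos (by linarith) hQ1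
    have h2 := hs _ hpos h1
    rw [div_mul_eq_mul_div, neg_le] at h2
    have h4 := (le_div_iff₀ hQ1).mp h2
    nlinarith
  · have h2 := hs 1 one_pos le_rfl
    have := (one_lt_div hQ1).mp h1
    linarith

lemma dot_self_nonneg' {d : ℕ} (v : Fin d → ℝ) : 0 ≤ v ⬝ᵥ v :=
  Finset.sum_nonneg fun i _ => mul_self_nonneg _

lemma dot_self_eq_zero' {d : ℕ} (v : Fin d → ℝ) (h : v ⬝ᵥ v = 0) : v = 0 := by
  funext i
  have h2 := (Finset.sum_eq_zero_iff_of_nonneg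
    (fun j _ => mul_self_nonneg (v j))).mp h i (mem_univ i)
  simpa [mul_self_eq_zero] using h2

lemma dot_sub_smul {d : ℕ} (u v : Fin d → ℝ) (s : ℝ) :
    (u - s • v) ⬝ᵥ (u - s • v) = u ⬝ᵥ u - 2*s*(u ⬝ᵥ v) + s^2*(v ⬝ᵥ v) := by
  have h : ∀ i : Fin d, (u - s • v) i * (u - s • v) i
      = u i * u i - 2*s*(u i * v i) + s^2*(v i * v i) := by
    intro i; simp only [Pi.sub_apply, Pi.smul_apply, smul_eq_mul]; ring
  simp only [dotProduct, h, Finset.sum_add_distrib, Finset.sum_sub_distrib,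
    ← Finset.mul_sum]

lemma dot_neg_pr {d : ℕ} (p r : Fin d → ℝ) :
    -(p ⬝ᵥ r) = (1/2)*((p - r) ⬝ᵥ (p - r)) - (1/2)*(r ⬝ᵥ r) - (1/2)*(p ⬝ᵥ p) := by
  have h : ∀ i : Fin d, (p - r) i * (p - r) i = p i * p i - 2*(p i * r i) + r i * r i := by
    intro i; simp only [Pi.sub_apply]; ring
  simp only [dotProduct, h, Finset.sum_add_distrib, Finset.sum_sub_distrib, ← Finset.mul_sum]
  ring

lemma dot_le_half {d : ℕ} (s u : Fin d → ℝ) :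
    s ⬝ᵥ u ≤ (1/2)*(s ⬝ᵥ s) + (1/2)*(u ⬝ᵥ u) := by
  simp only [dotProduct, Finset.mul_sum, ← Finset.sum_add_distrib]
  exact Finset.sum_le_sum fun i _ => by nlinarith [sq_nonneg (s i - u i)]

lemma l1Norm_nonneg {m : ℕ} (v : Fin m → ℝ) : 0 ≤ l1Norm v :=
  Finset.sum_nonneg fun i _ => abs_nonneg _

lemma l1Norm_sum_le {m : ℕ} {ι : Type*} (s : Finset ι) (g : ι → Fin m → ℝ) :
    l1Norm (∑ t ∈ s, g t) ≤ ∑ t ∈ s, l1Norm (g t) := by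
  unfold l1Norm
  rw [Finset.sum_comm]
  refine Finset.sum_le_sum fun i _ => ?_
  simpa using Finset.abs_sum_le_sum_abs (fun t => g t i) s

lemma l1Norm_smul {m : ℕ} (c : ℝ) (v : Fin m → ℝ) : l1Norm (c • v) = |c| * l1Norm v := by
  unfold l1Norm
  rw [Finset.mul_sum]
  exact Finset.sum_congr rfl fun i _ => by simp [abs_mul]

lemma l1Norm_eq_zero {m : ℕ} (v : Fin m → ℝ) (h : l1Norm v ≤ 0) : v = 0 := by
  funext i
  have h2 := (Finset.sum_eq_zero_iff_of_nonneg (fun j _ => abs_nonneg (v j))).mp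
    (le_antisymm h (l1Norm_nonneg v)) i (mem_univ i)
  simpa using h2

/-- Variational inequality / three point property for the prox step. -/
lemma prox_key {d : ℕ} (B : Matrix (Fin d) (Fin d) ℝ) (Z : Set (Fin d → ℝ))
    (hZcx : Convex ℝ Z) (K : ℝ) (a w y z : Fin d → ℝ) (hy : y ∈ Z) (hz : z ∈ Z)
    (hmin : IsMinOn (fun x => K * (a ⬝ᵥ x)
      + (1/2) * ((B *ᵥ (w - x)) ⬝ᵥ (B *ᵥ (w - x)))) Z y) :
    K * (a ⬝ᵥ y) - K * (a ⬝ᵥ z)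
      ≤ (1/2)*((B *ᵥ (w-z)) ⬝ᵥ (B *ᵥ (w-z))) - (1/2)*((B *ᵥ (y-z)) ⬝ᵥ (B *ᵥ (y-z)))
        - (1/2)*((B *ᵥ (w-y)) ⬝ᵥ (B *ᵥ (w-y))) := by
  set e : Fin d → ℝ := z - y with he
  set p : Fin d → ℝ := B *ᵥ (w - y) with hp
  set r : Fin d → ℝ := B *ᵥ e with hr
  have hL : 0 ≤ K * (a ⬝ᵥ e) - p ⬝ᵥ r := by
    refine sLQ_nonneg ((1/2) * (r ⬝ᵥ r)) _ (fun s hs0 hs1 => ?_)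
      (mul_nonneg (by norm_num) (dot_self_nonneg' r))
    have hmem : y + s • e ∈ Z := by
      have := hZcx hy hz (by linarith : (0:ℝ) ≤ 1 - s) hs0.le (by ring)
      convert this using 1
      rw [he]; funext i; simp; ring
    have hle := isMinOn_iff.mp hmin _ hmem
    have hexp : K * (a ⬝ᵥ (y + s • e))
        + (1/2) * ((B *ᵥ (w - (y + s • e))) ⬝ᵥ (B *ᵥ (w - (y + s • e))))
        = (K * (a ⬝ᵥ y) + (1/2) * (p ⬝ᵥ p))
          + (s * (K * (a ⬝ᵥ e) - p ⬝ᵥ r) + s^2 * ((1/2) * (r ⬝ᵥ r))) := by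
      have h1 : w - (y + s • e) = (w - y) - s • e := by funext i; simp; ring
      rw [h1, Matrix.mulVec_sub, Matrix.mulVec_smul, ← hp, ← hr, dot_sub_smul,
        dotProduct_add, dotProduct_smul]
      simp only [smul_eq_mul]
      ring
    rw [hexp] at hle
    linarith
  have hwz : B *ᵥ (w - z) = p - r := by
    rw [hp, hr, he, ← Matrix.mulVec_sub]; congr 1; funext i; simp
  have hyz : (B *ᵥ (y-z)) ⬝ᵥ (B *ᵥ (y-z)) = r ⬝ᵥ r := by
    have h2 : (y : Fin d → ℝ) - z = -e := by rw [he]; funext i; simp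
    rw [h2, Matrix.mulVec_neg, neg_dotProduct, dotProduct_neg, neg_neg]
  have hae : a ⬝ᵥ e = a ⬝ᵥ z - a ⬝ᵥ y := by rw [he, dotProduct_sub]
  have hid := dot_neg_pr p r
  rw [hwz, hyz, ← hid]
  rw [hae] at hL
  linarith

lemma prox_unique {d : ℕ} (B C : Matrix (Fin d) (Fin d) ℝ) (hCB : ∀ v, C *ᵥ (B *ᵥ v) = v)
    (Z : Set (Fin d → ℝ)) (hZcx : Convex ℝ Z) (K : ℝ) (a w y₁ y₂ : Fin d → ℝ)
    (hy₁ : y₁ ∈ Z) (hy₂ : y₂ ∈ Z)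
    (hmin₁ : IsMinOn (fun x => K * (a ⬝ᵥ x)
      + (1/2) * ((B *ᵥ (w - x)) ⬝ᵥ (B *ᵥ (w - x)))) Z y₁)
    (hmin₂ : IsMinOn (fun x => K * (a ⬝ᵥ x)
      + (1/2) * ((B *ᵥ (w - x)) ⬝ᵥ (B *ᵥ (w - x)))) Z y₂) : y₁ = y₂ := by
  have h12 := prox_key B Z hZcx K a w y₁ y₂ hy₁ hy₂ hmin₁
  have he1 := isMinOn_iff.mp hmin₁ _ hy₂
  have he2 := isMinOn_iff.mp hmin₂ _ hy₁
  have hzero : (B *ᵥ (y₁ - y₂)) ⬝ᵥ (B *ᵥ (y₁ - y₂)) = 0 :=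
    le_antisymm (by linarith) (dot_self_nonneg' _)
  have hB0 := dot_self_eq_zero' _ hzero
  have h3 := congrArg (fun v => C *ᵥ v) hB0
  simp only [hCB, Matrix.mulVec_zero] at h3
  exact sub_eq_zero.mp h3

/-- Conditioning on the first `t` coordinates: if `G ξ i` does not depend on the `t`-th
coordinate of `ξ`, the expectation of `G ξ (ξ t)` can be computed coordinatewise. -/
lemma cond_exp {n T : ℕ} (p : Fin n → ℝ) (hp1 : ∑ i, p i = 1) (t : Fin (T+1))
    (G : (Fin (T+1) → Fin n) → Fin n → ℝ)
    (hG : ∀ ξ i, G (Function.update ξ t i) = G ξ) :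
    ∑ ξ : Fin (T+1) → Fin n, (∏ s, p (ξ s)) * G ξ (ξ t)
      = ∑ ξ : Fin (T+1) → Fin n, (∏ s, p (ξ s)) * ∑ i, p i * G ξ i := by
  have hWsplit : ∀ (ξ : Fin (T+1) → Fin n) (i : Fin n),
      ∏ s, p (Function.update ξ t i s) = p i * ∏ s ∈ univ.erase t, p (ξ s) := by
    intro ξ i
    rw [← Finset.mul_prod_erase univ (fun s => p (Function.update ξ t i s)) (mem_univ t),
      Function.update_self]
    congr 1
    exact Finset.prod_congr rfl fun s hs => by
      rw [Function.update_of_ne (Finset.ne_of_mem_erase hs)]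
  have hW : ∀ (ξ : Fin (T+1) → Fin n),
      ∏ s, p (ξ s) = p (ξ t) * ∏ s ∈ univ.erase t, p (ξ s) :=
    fun ξ => (Finset.mul_prod_erase univ (fun s => p (ξ s)) (mem_univ t)).symm
  have lhs_eq : ∑ ξ : Fin (T+1) → Fin n, (∏ s, p (ξ s)) * G ξ (ξ t)
      = ∑ ξ : Fin (T+1) → Fin n, ∑ i, (∏ s, p (ξ s)) * p i * G ξ (ξ t) := by
    refine Finset.sum_congr rfl fun ξ _ => ?_
    have h2 : ∑ i, (∏ s, p (ξ s)) * p i * G ξ (ξ t)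
        = ((∏ s, p (ξ s)) * G ξ (ξ t)) * ∑ i, p i := by
      rw [Finset.mul_sum]; exact Finset.sum_congr rfl fun i _ => by ring
    rw [h2, hp1, mul_one]
  rw [lhs_eq]
  have rhs_eq : ∀ ξ : Fin (T+1) → Fin n, (∏ s, p (ξ s)) * ∑ i, p i * G ξ i
      = ∑ i, (∏ s, p (ξ s)) * p i * G ξ i := by
    intro ξ; rw [Finset.mul_sum]; exact Finset.sum_congr rfl fun i _ => by ring
  simp only [rhs_eq]
  rw [← Finset.sum_product', ← Finset.sum_product']
  refine Finset.sum_nbij' (fun q => (Function.update q.1 t q.2, q.1 t))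
    (fun q => (Function.update q.1 t q.2, q.1 t)) ?_ ?_ ?_ ?_ ?_
  · intro q _; exact mem_univ _
  · intro q _; exact mem_univ _
  · intro q _
    simp only [Function.update_self]
    rw [Function.update_idem, Function.update_eq_self]
  · intro q _
    simp only [Function.update_self]
    rw [Function.update_idem, Function.update_eq_self]
  · intro q _
    obtain ⟨ξ, i⟩ := q
    simp only
    rw [hWsplit, hG, hW ξ]
    ring

set_option maxHeartbeats 4000000 in
theorem pwSGD_l1_relative_error
    (n d : ℕ)
    (A : Matrix (Fin n) (Fin d) ℝ) (hrank : A.rank = d) (b : Fin n → ℝ)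
    (f : (Fin d → ℝ) → ℝ) (hf : f = fun x => l1Norm (A *ᵥ x - b))
    (R : Matrix (Fin d) (Fin d) ℝ) (hR : IsUnit R)
    (α β : ℝ) (hcond : IsConditioned1 α β (A * R⁻¹))
    (γ : ℝ) (hγ0 : 0 ≤ γ) (hγ1 : γ < 1)
    (lam : Fin n → ℝ)
    (hlam : ∀ i, (1 - γ) * l1Norm ((A * R⁻¹) i) ≤ lam i ∧
                 lam i ≤ (1 + γ) * l1Norm ((A * R⁻¹) i))
    (hlamsum : 0 < ∑ j, lam j)
    (prob : Fin n → ℝ) (hprob : ∀ i, prob i = lam i / ∑ j, lam j)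
    (F : Matrix (Fin d) (Fin d) ℝ) (hF : IsUnit F)
    (H : Matrix (Fin d) (Fin d) ℝ) (hH : H = (F * Fᵀ)⁻¹)
    (Z : Set (Fin d → ℝ)) (hZne : Z.Nonempty) (hZcl : IsClosed Z) (hZcx : Convex ℝ Z)
    (x0 : Fin d → ℝ) (hx0 : x0 ∈ Z)
    (sgn : ℝ → ℝ) (hsgn : ∀ t : ℝ, t ≠ 0 → sgn t = t / |t|)
    (hsgn0 : sgn 0 ∈ Set.Icc (-1 : ℝ) 1)
    (xstar : Fin d → ℝ) (hxstarZ : xstar ∈ Z) (hxstar : ∀ x ∈ Z, f xstar ≤ f x)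
    (hfpos : 0 < f xstar) (hxstarne : xstar ≠ 0)
    (ε : ℝ) (hε : 0 < ε)
    (c1 c2 c3 : ℝ) (hc1 : c1 = (1 + γ) / (1 - γ))
    (hc2 : c2 = normHsq H (xstar - x0) / normHsq H xstar)
    (hc3 : c3 = l1Norm (A *ᵥ xstar) / f xstar) :
    ∃ η : ℝ, 0 < η ∧
      ∀ (T : ℕ) (traj : (Fin (T+1) → Fin n) → ℕ → (Fin d → ℝ)),
        (d : ℝ) * (α * β) ^ 2 * (entry1Norm (R * F) * entry1Norm ((R * F)⁻¹)) ^ 2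
            * c1 ^ 2 * c2 * c3 ^ 2 / ε ^ 2 ≤ (T : ℝ) →
        (∀ ξ, traj ξ 0 = x0) →
        (∀ ξ t, traj ξ t ∈ Z) →
        (∀ ξ (t : Fin (T+1)),
          IsMinOn (fun x =>
              η * (sgn (A (ξ t) ⬝ᵥ traj ξ t.1 - b (ξ t)) / prob (ξ t)) * (A (ξ t) ⬝ᵥ x)
                + (1/2) * normHsq H (traj ξ t.1 - x)) Z (traj ξ (t.1 + 1))) →
        ((∑ ξ : Fin (T+1) → Fin n, (∏ t, prob (ξ t)) *
            f (((T : ℝ) + 1)⁻¹ • ∑ t ∈ Finset.range (T+1), traj ξ t)) - f xstar) / f xstar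
          ≤ ε := by
  subst hf hH hc1 hc2 hc3
  obtain ⟨hβ0, hUα, hcond3⟩ := hcond
  have hγ' : (0:ℝ) < 1 - γ := by linarith
  have hγ'' : (0:ℝ) < 1 + γ := by linarith
  have hRdet : IsUnit R.det := (Matrix.isUnit_iff_isUnit_det R).mp hR
  have hFdet : IsUnit F.det := (Matrix.isUnit_iff_isUnit_det F).mp hF
  have hdpos : 0 < d := by
    rcases Nat.eq_zero_or_pos d with h | h
    · subst h; exact absurd (funext fun i => i.elim0) hxstarne
    · exact h
  set fs : ℝ := l1Norm (A *ᵥ xstar - b) with hfs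
  -- rows of U = A R⁻¹
  have hrowU : ∀ i, (A * R⁻¹) i = A i ᵥ* R⁻¹ := fun i => by
    funext j; simp [Matrix.mul_apply, Matrix.vecMul, dotProduct]
  have hAU : ∀ i : Fin n, A i = (A * R⁻¹) i ᵥ* R := by
    intro i
    rw [hrowU, Matrix.vecMul_vecMul, Matrix.nonsing_inv_mul _ hRdet, Matrix.vecMul_one]
  -- probabilities
  have hlamnn : ∀ i, 0 ≤ lam i := fun i =>
    le_trans (mul_nonneg hγ'.le (l1Norm_nonneg _)) (hlam i).1
  have hpnn : ∀ i, 0 ≤ prob i := fun i => by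
    rw [hprob]; exact div_nonneg (hlamnn i) hlamsum.le
  have hp1 : ∑ i, prob i = 1 := by
    simp only [hprob]; rw [← Finset.sum_div]; exact div_self (ne_of_gt hlamsum)
  have hrowzero : ∀ i, prob i = 0 → A i = 0 := by
    intro i h
    have hlam0 : lam i = 0 := by
      rw [hprob] at h
      rcases div_eq_zero_iff.mp h with h' | h'
      · exact h'
      · exact absurd h' (ne_of_gt hlamsum)
    have hU0 : (A * R⁻¹) i = 0 := by
      refine l1Norm_eq_zero _ ?_
      nlinarith [(hlam i).1, l1Norm_nonneg ((A * R⁻¹) i)]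
    rw [hAU i, hU0]
    exact Matrix.zero_vecMul R
  -- the quadratic form
  set q : (Fin d → ℝ) → ℝ := fun v => (F⁻¹ *ᵥ v) ⬝ᵥ (F⁻¹ *ᵥ v) with hqdef
  have hq : ∀ v, normHsq ((F * Fᵀ)⁻¹) v = q v := by
    intro v
    have hH2 : (F * Fᵀ)⁻¹ = (F⁻¹)ᵀ * F⁻¹ := by
      rw [Matrix.mul_inv_rev, Matrix.transpose_nonsing_inv]
    unfold normHsq
    rw [hH2, ← Matrix.mulVec_mulVec, Matrix.dotProduct_mulVec, Matrix.vecMul_transpose]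
  have hqnn : ∀ v, 0 ≤ q v := fun v => dot_self_nonneg' _
  have hqneg : ∀ v : Fin d → ℝ, q (-v) = q v := fun v => by
    simp only [hqdef, Matrix.mulVec_neg, neg_dotProduct, dotProduct_neg, neg_neg]
  have hFinv : ∀ v : Fin d → ℝ, F *ᵥ (F⁻¹ *ᵥ v) = v := by
    intro v
    rw [Matrix.mulVec_mulVec, Matrix.mul_nonsing_inv _ hFdet, Matrix.one_mulVec]
  have hqzero : ∀ v, q v = 0 → v = 0 := by
    intro v h
    have h0 := dot_self_eq_zero' _ h
    have h3 := congrArg (fun w => F *ᵥ w) h0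
    simpa [hFinv, Matrix.mulVec_zero] using h3
  -- per-row energies
  set X : Fin n → ℝ := fun i => (A i ᵥ* F) ⬝ᵥ (A i ᵥ* F) with hXdef
  have hXnn : ∀ i, 0 ≤ X i := fun i => dot_self_nonneg' _
  set G2 : ℝ := ∑ i, X i / prob i with hG2def
  have hG2termnn : ∀ i, 0 ≤ X i / prob i := fun i => div_nonneg (hXnn i) (hpnn i)
  have hG2pos : 0 < G2 := by
    obtain ⟨i0, hi0⟩ : ∃ i, A i ≠ 0 := by
      by_contra h
      push_neg at h
      have hA0 : A = 0 := by funext i j; simp [h i]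
      rw [hA0, Matrix.rank_zero] at hrank
      omega
    have hpi0 : 0 < prob i0 :=
      lt_of_le_of_ne (hpnn i0) (fun h => hi0 (hrowzero i0 h.symm))
    have hXi0 : 0 < X i0 := by
      rcases lt_or_eq_of_le (hXnn i0) with h | h
      · exact h
      · exfalso
        have hv0 := dot_self_eq_zero' _ h.symm
        have h3 := congrArg (fun w => w ᵥ* F⁻¹) hv0
        simp only [Matrix.vecMul_vecMul, Matrix.mul_nonsing_inv _ hFdet,
          Matrix.vecMul_one, Matrix.zero_vecMul] at h3
        exact hi0 h3
    calc (0:ℝ) < X i0 / prob i0 := div_pos hXi0 hpi0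
      _ ≤ G2 := Finset.single_le_sum (fun i _ => hG2termnn i) (mem_univ i0)
  -- norms of matrices
  have hent_nn : ∀ (M : Matrix (Fin d) (Fin d) ℝ), 0 ≤ entry1Norm M := fun M =>
    Finset.sum_nonneg fun i _ => Finset.sum_nonneg fun j _ => abs_nonneg _
  have hrowsum : ∀ (M : Matrix (Fin d) (Fin d) ℝ) (k : Fin d),
      ∑ j, |M k j| ≤ entry1Norm M := fun M k =>
    Finset.single_le_sum (f := fun i => ∑ j, |M i j|)
      (fun i _ => Finset.sum_nonneg fun j _ => abs_nonneg _) (mem_univ k)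
  -- ℓ₁ norm of a row-vector-matrix product
  have hvecMul_l1 : ∀ (v : Fin d → ℝ) (M : Matrix (Fin d) (Fin d) ℝ),
      l1Norm (v ᵥ* M) ≤ l1Norm v * entry1Norm M := by
    intro v M
    unfold l1Norm
    calc ∑ j, |(v ᵥ* M) j| ≤ ∑ j, ∑ k, |v k| * |M k j| := by
          refine Finset.sum_le_sum fun j _ => ?_
          calc |(v ᵥ* M) j| = |∑ k, v k * M k j| := by
                simp [Matrix.vecMul, dotProduct]
            _ ≤ ∑ k, |v k * M k j| := Finset.abs_sum_le_sum_abs _ _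
            _ = ∑ k, |v k| * |M k j| := Finset.sum_congr rfl fun k _ => abs_mul _ _
      _ = ∑ k, |v k| * ∑ j, |M k j| := by
          rw [Finset.sum_comm]
          exact Finset.sum_congr rfl fun k _ => by rw [Finset.mul_sum]
      _ ≤ ∑ k, |v k| * entry1Norm M :=
          Finset.sum_le_sum fun k _ => mul_le_mul_of_nonneg_left (hrowsum M k) (abs_nonneg _)
      _ = (∑ k, |v k|) * entry1Norm M := by rw [Finset.sum_mul]
  -- dot self ≤ (l1Norm)²
  have hdot_le_l1sq : ∀ v : Fin d → ℝ, v ⬝ᵥ v ≤ (l1Norm v)^2 := by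
    intro v
    unfold l1Norm dotProduct
    calc ∑ i, v i * v i ≤ ∑ i, |v i| * |v i| := by
          refine Finset.sum_le_sum fun i _ => ?_
          rw [← abs_mul_abs_self]
      _ ≤ (∑ i, |v i|)^2 := by
          rw [sq, Finset.sum_mul_sum]
          refine Finset.sum_le_sum fun i _ => ?_
          exact Finset.single_le_sum (f := fun j => |v i| * |v j|)
            (fun j _ => mul_nonneg (abs_nonneg _) (abs_nonneg _)) (mem_univ i)
  -- bound on G2
  set NRF : ℝ := entry1Norm (R * F) with hNRF
  set NRFi : ℝ := entry1Norm ((R * F)⁻¹) with hNRFi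
  have hS_le : (∑ j, lam j) ≤ (1 + γ) * α := by
    calc (∑ j, lam j) ≤ ∑ j, (1 + γ) * l1Norm ((A * R⁻¹) j) :=
          Finset.sum_le_sum fun j _ => (hlam j).2
      _ = (1 + γ) * entry1Norm (A * R⁻¹) := by
          rw [← Finset.mul_sum]; rfl
      _ ≤ (1 + γ) * α := by
          exact mul_le_mul_of_nonneg_left hUα hγ''.le
  have hXb : ∀ i, X i / prob i
      ≤ ((∑ j, lam j)/(1-γ)) * NRF^2 * l1Norm ((A * R⁻¹) i) := by
    intro i
    rcases eq_or_ne (prob i) 0 with h | h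
    · rw [h, div_zero]
      exact mul_nonneg (mul_nonneg (div_nonneg hlamsum.le hγ'.le) (sq_nonneg _))
        (l1Norm_nonneg _)
    · have hpipos : 0 < prob i := lt_of_le_of_ne (hpnn i) (Ne.symm h)
      have hlamne : lam i ≠ 0 := by
        intro h0
        rw [hprob, h0, zero_div] at h
        exact h rfl
      have hlampos : 0 < lam i := lt_of_le_of_ne (hlamnn i) (Ne.symm hlamne)
      have hl1pos : 0 < l1Norm ((A * R⁻¹) i) := by
        rcases lt_or_eq_of_le (l1Norm_nonneg ((A * R⁻¹) i)) with h' | h'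
        · exact h'
        · exfalso; nlinarith [(hlam i).2]
      have hXbound : X i ≤ (l1Norm ((A * R⁻¹) i))^2 * NRF^2 := by
        have hrow : A i ᵥ* F = (A * R⁻¹) i ᵥ* (R * F) := by
          rw [hAU i, Matrix.vecMul_vecMul]
        calc X i = (A i ᵥ* F) ⬝ᵥ (A i ᵥ* F) := rfl
          _ ≤ (l1Norm (A i ᵥ* F))^2 := hdot_le_l1sq _
          _ ≤ (l1Norm ((A * R⁻¹) i) * NRF)^2 := by
              have := hvecMul_l1 ((A * R⁻¹) i) (R * F)
              rw [hrow]
              exact pow_le_pow_left₀ (l1Norm_nonneg _) this 2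
          _ = (l1Norm ((A * R⁻¹) i))^2 * NRF^2 := by ring
      have hpe : prob i = lam i / (∑ j, lam j) := hprob i
      have hdenom : 0 < (1-γ) * l1Norm ((A * R⁻¹) i) := mul_pos hγ' hl1pos
      calc X i / prob i = X i * (∑ j, lam j) / lam i := by
            rw [hpe, div_div_eq_mul_div]
        _ ≤ ((l1Norm ((A * R⁻¹) i))^2 * NRF^2) * (∑ j, lam j)
              / ((1-γ) * l1Norm ((A * R⁻¹) i)) := by
            refine div_le_div₀ (by positivity) ?_ hdenom (hlam i).1
            exact mul_le_mul_of_nonneg_right hXbound hlamsum.le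
        _ = ((∑ j, lam j)/(1-γ)) * NRF^2 * l1Norm ((A * R⁻¹) i) := by
            rw [div_eq_iff (ne_of_gt hdenom)]
            have hcancel : (∑ j, lam j)/(1-γ) * (1-γ) = ∑ j, lam j :=
              div_mul_cancel₀ _ (ne_of_gt hγ')
            linear_combination (-(NRF^2 * l1Norm ((A * R⁻¹) i) * l1Norm ((A * R⁻¹) i))) * hcancel
  have hUent_nn : 0 ≤ entry1Norm (A * R⁻¹) :=
    Finset.sum_nonneg fun i _ => Finset.sum_nonneg fun j _ => abs_nonneg _
  have hα0 : 0 ≤ α := le_trans hUent_nn hUα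
  have hG2b : G2 ≤ α^2 * ((1+γ)/(1-γ)) * NRF^2 := by
    have h1 : G2 ≤ ((∑ j, lam j)/(1-γ)) * NRF^2 * entry1Norm (A * R⁻¹) := by
      calc G2 ≤ ∑ i, ((∑ j, lam j)/(1-γ)) * NRF^2 * l1Norm ((A * R⁻¹) i) :=
            Finset.sum_le_sum fun i _ => hXb i
        _ = ((∑ j, lam j)/(1-γ)) * NRF^2 * ∑ i, l1Norm ((A * R⁻¹) i) := by
            rw [Finset.mul_sum]
        _ = ((∑ j, lam j)/(1-γ)) * NRF^2 * entry1Norm (A * R⁻¹) := rfl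
    refine le_trans h1 ?_
    rw [div_mul_eq_mul_div, div_mul_eq_mul_div, mul_comm (α^2) ((1+γ)/(1-γ)),
      div_mul_eq_mul_div, div_mul_eq_mul_div, div_le_div_iff_of_pos_right hγ']
    nlinarith [hS_le, hUα, sq_nonneg NRF, hUent_nn, hlamsum.le,
      mul_le_mul hS_le hUα hUent_nn (by positivity : (0:ℝ) ≤ (1+γ)*α),
      mul_le_mul_of_nonneg_right
        (mul_le_mul hS_le hUα hUent_nn (by positivity : (0:ℝ) ≤ (1+γ)*α))
        (sq_nonneg NRF)]
  -- bound on q xstar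
  have hlinf_mem : ∀ (v : Fin d → ℝ) (k : Fin d), |v k| ≤ linfNorm v := by
    intro v k
    unfold linfNorm
    exact le_ciSup (f := fun i => |v i|) (Set.Finite.bddAbove (Set.finite_range _)) k
  have hlinf_nn : ∀ v : Fin d → ℝ, 0 ≤ linfNorm v := by
    intro v
    exact le_trans (abs_nonneg _) (hlinf_mem v ⟨0, hdpos⟩)
  have hUAx : (A * R⁻¹) *ᵥ (R *ᵥ xstar) = A *ᵥ xstar := by
    rw [Matrix.mulVec_mulVec, Matrix.mul_assoc, Matrix.nonsing_inv_mul _ hRdet,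
      Matrix.mul_one]
  have hFRx : F⁻¹ *ᵥ xstar = (R * F)⁻¹ *ᵥ (R *ᵥ xstar) := by
    rw [Matrix.mulVec_mulVec, Matrix.mul_inv_rev, Matrix.mul_assoc,
      Matrix.nonsing_inv_mul _ hRdet, Matrix.mul_one]
  have hqx : q xstar ≤ (d:ℝ) * β^2 * NRFi^2 * (l1Norm (A *ᵥ xstar))^2 := by
    have hcoord : ∀ j : Fin d, |(F⁻¹ *ᵥ xstar) j| ≤ linfNorm (R *ᵥ xstar) * NRFi := by
      intro j
      rw [hFRx]
      calc |((R*F)⁻¹ *ᵥ (R *ᵥ xstar)) j| = |∑ k, (R*F)⁻¹ j k * (R *ᵥ xstar) k| := by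
            simp [Matrix.mulVec, dotProduct]
        _ ≤ ∑ k, |(R*F)⁻¹ j k * (R *ᵥ xstar) k| := Finset.abs_sum_le_sum_abs _ _
        _ = ∑ k, |(R*F)⁻¹ j k| * |(R *ᵥ xstar) k| :=
            Finset.sum_congr rfl fun k _ => abs_mul _ _
        _ ≤ ∑ k, |(R*F)⁻¹ j k| * linfNorm (R *ᵥ xstar) :=
            Finset.sum_le_sum fun k _ =>
              mul_le_mul_of_nonneg_left (hlinf_mem _ k) (abs_nonneg _)
        _ = (∑ k, |(R*F)⁻¹ j k|) * linfNorm (R *ᵥ xstar) := by rw [Finset.sum_mul]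
        _ ≤ NRFi * linfNorm (R *ᵥ xstar) :=
            mul_le_mul_of_nonneg_right (hrowsum _ j) (hlinf_nn _)
        _ = linfNorm (R *ᵥ xstar) * NRFi := mul_comm _ _
    have hlinfb : linfNorm (R *ᵥ xstar) ≤ β * l1Norm (A *ᵥ xstar) := by
      have := hcond3 (R *ᵥ xstar)
      rwa [hUAx] at this
    have hM0 : 0 ≤ linfNorm (R *ᵥ xstar) * NRFi :=
      mul_nonneg (hlinf_nn _) (hent_nn _)
    calc q xstar = ∑ j, (F⁻¹ *ᵥ xstar) j * (F⁻¹ *ᵥ xstar) j := rfl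
      _ ≤ ∑ j : Fin d, (linfNorm (R *ᵥ xstar) * NRFi)^2 := by
          refine Finset.sum_le_sum fun j _ => ?_
          rw [← abs_mul_abs_self ((F⁻¹ *ᵥ xstar) j), sq]
          exact mul_le_mul (hcoord j) (hcoord j) (abs_nonneg _) hM0
      _ = (d:ℝ) * (linfNorm (R *ᵥ xstar) * NRFi)^2 := by
          rw [Finset.sum_const, Finset.card_univ, Fintype.card_fin, nsmul_eq_mul]
      _ ≤ (d:ℝ) * (β * l1Norm (A *ᵥ xstar) * NRFi)^2 := by
          refine mul_le_mul_of_nonneg_left ?_ (by positivity)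
          refine pow_le_pow_left₀ hM0 ?_ 2
          exact mul_le_mul_of_nonneg_right hlinfb (hent_nn _)
      _ = (d:ℝ) * β^2 * NRFi^2 * (l1Norm (A *ᵥ xstar))^2 := by ring
  have hqxpos : 0 < q xstar := by
    rcases lt_or_eq_of_le (hqnn xstar) with h | h
    · exact h
    · exact absurd (hqzero xstar h.symm) hxstarne
  have hc1ge : (1:ℝ) ≤ (1+γ)/(1-γ) := by
    rw [le_div_iff₀ hγ']
    linarith
  have hfspos : 0 < fs := hfpos
  have hfsne : fs ≠ 0 := ne_of_gt hfspos
  -- the key constant inequality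
  have hkey : q (xstar - x0) * G2
      ≤ ((d:ℝ) * (α * β)^2 * (NRF * NRFi)^2 * ((1+γ)/(1-γ))^2
          * (q (xstar - x0) / q xstar) * (l1Norm (A *ᵥ xstar) / fs)^2) * fs^2 := by
    set l1x := l1Norm (A *ᵥ xstar) with hl1x
    set c1v : ℝ := (1+γ)/(1-γ) with hc1v
    have hc1v0 : 0 ≤ c1v := le_trans zero_le_one hc1ge
    have hb1 : q xstar * G2
        ≤ ((d:ℝ) * β^2 * NRFi^2 * l1x^2) * (α^2 * c1v * NRF^2) :=
      mul_le_mul hqx hG2b hG2pos.le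
        (mul_nonneg (mul_nonneg (mul_nonneg (Nat.cast_nonneg d) (sq_nonneg β))
          (sq_nonneg NRFi)) (sq_nonneg l1x))
    have hb2 : ((d:ℝ) * β^2 * NRFi^2 * l1x^2) * (α^2 * c1v * NRF^2)
        ≤ (d:ℝ) * α^2 * β^2 * NRF^2 * NRFi^2 * c1v^2 * l1x^2 := by
      have h := mul_le_mul_of_nonneg_left hc1ge
        (mul_nonneg (mul_nonneg (mul_nonneg (mul_nonneg (Nat.cast_nonneg d) (sq_nonneg β))
          (sq_nonneg NRFi)) (sq_nonneg l1x))
          (mul_nonneg (mul_nonneg (sq_nonneg α) hc1v0) (sq_nonneg NRF))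
          : (0:ℝ) ≤ (d:ℝ) * β^2 * NRFi^2 * l1x^2 * (α^2 * c1v * NRF^2))
      calc ((d:ℝ) * β^2 * NRFi^2 * l1x^2) * (α^2 * c1v * NRF^2)
          = ((d:ℝ) * β^2 * NRFi^2 * l1x^2 * (α^2 * c1v * NRF^2)) * 1 := by ring
        _ ≤ ((d:ℝ) * β^2 * NRFi^2 * l1x^2 * (α^2 * c1v * NRF^2)) * c1v := h
        _ = (d:ℝ) * α^2 * β^2 * NRF^2 * NRFi^2 * c1v^2 * l1x^2 := by ring
    have hmain : q xstar * G2 ≤ (d:ℝ) * α^2 * β^2 * NRF^2 * NRFi^2 * c1v^2 * l1x^2 :=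
      le_trans hb1 hb2
    have hfrac : 0 ≤ q (xstar - x0) / q xstar := div_nonneg (hqnn _) hqxpos.le
    have h3 := mul_le_mul_of_nonneg_left hmain hfrac
    have hfs2 : (l1x/fs)^2 * fs^2 = l1x^2 := by
      rw [div_pow, div_mul_cancel₀]
      exact pow_ne_zero 2 hfsne
    calc q (xstar - x0) * G2
        = (q (xstar - x0) / q xstar) * (q xstar * G2) := by
          rw [← mul_assoc, div_mul_cancel₀ _ (ne_of_gt hqxpos)]
      _ ≤ (q (xstar - x0) / q xstar)
            * ((d:ℝ) * α^2 * β^2 * NRF^2 * NRFi^2 * c1v^2 * l1x^2) := h3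
      _ = ((d:ℝ) * (α * β)^2 * (NRF * NRFi)^2 * c1v^2
            * (q (xstar - x0) / q xstar) * (l1x / fs)^2) * fs^2 := by
          linear_combination (-((d:ℝ) * (α * β)^2 * (NRF * NRFi)^2 * c1v^2
            * (q (xstar - x0) / q xstar))) * hfs2
  -- sign function facts
  have hsgn_mul : ∀ r : ℝ, sgn r * r = |r| := by
    intro r
    rcases eq_or_ne r 0 with h | h
    · simp [h]
    · rw [hsgn r h, div_mul_eq_mul_div, eq_comm, eq_div_iff (abs_ne_zero.mpr h),
        abs_mul_abs_self]
  have hsgn_abs : ∀ r : ℝ, |sgn r| ≤ 1 := by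
    intro r
    rcases eq_or_ne r 0 with h | h
    · rw [h]; exact abs_le.mpr ⟨hsgn0.1, hsgn0.2⟩
    · rw [hsgn r h, abs_div, abs_abs, div_self (abs_ne_zero.mpr h)]
  -- subgradient inequality
  have hsub : ∀ x : Fin d → ℝ, l1Norm (A *ᵥ x - b) - fs
      ≤ ∑ i, sgn (A i ⬝ᵥ x - b i) * (A i ⬝ᵥ (x - xstar)) := by
    intro x
    rw [hfs]
    unfold l1Norm
    rw [← Finset.sum_sub_distrib]
    refine Finset.sum_le_sum fun i _ => ?_
    have h1 : (A *ᵥ x - b) i = A i ⬝ᵥ x - b i := rfl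
    have h2 : (A *ᵥ xstar - b) i = A i ⬝ᵥ xstar - b i := rfl
    rw [h1, h2]
    have h3 : A i ⬝ᵥ (x - xstar) = (A i ⬝ᵥ x - b i) - (A i ⬝ᵥ xstar - b i) := by
      rw [dotProduct_sub]; ring
    rw [h3]
    have h4 : sgn (A i ⬝ᵥ x - b i) * ((A i ⬝ᵥ x - b i) - (A i ⬝ᵥ xstar - b i))
        = |A i ⬝ᵥ x - b i| - sgn (A i ⬝ᵥ x - b i) * (A i ⬝ᵥ xstar - b i) := by
      rw [mul_sub, hsgn_mul]
    rw [h4]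
    have h5 : sgn (A i ⬝ᵥ x - b i) * (A i ⬝ᵥ xstar - b i) ≤ |A i ⬝ᵥ xstar - b i| := by
      calc sgn (A i ⬝ᵥ x - b i) * (A i ⬝ᵥ xstar - b i)
          ≤ |sgn (A i ⬝ᵥ x - b i) * (A i ⬝ᵥ xstar - b i)| := le_abs_self _
        _ = |sgn (A i ⬝ᵥ x - b i)| * |A i ⬝ᵥ xstar - b i| := abs_mul _ _
        _ ≤ 1 * |A i ⬝ᵥ xstar - b i| :=
            mul_le_mul_of_nonneg_right (hsgn_abs _) (abs_nonneg _)
        _ = |A i ⬝ᵥ xstar - b i| := one_mul _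
    linarith
  -- prox wrappers
  have hprox : ∀ (K : ℝ) (a w y z : Fin d → ℝ), y ∈ Z → z ∈ Z →
      IsMinOn (fun x => K * (a ⬝ᵥ x) + (1/2) * q (w - x)) Z y →
      K * (a ⬝ᵥ y) - K * (a ⬝ᵥ z)
        ≤ (1/2)*q (w-z) - (1/2)*q (y-z) - (1/2)*q (w-y) := by
    intro K a w y z hy hz hmin
    simp only [hqdef] at hmin ⊢
    exact prox_key F⁻¹ Z hZcx K a w y z hy hz hmin
  have huniq : ∀ (K : ℝ) (a w y₁ y₂ : Fin d → ℝ), y₁ ∈ Z → y₂ ∈ Z →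
      IsMinOn (fun x => K * (a ⬝ᵥ x) + (1/2) * q (w - x)) Z y₁ →
      IsMinOn (fun x => K * (a ⬝ᵥ x) + (1/2) * q (w - x)) Z y₂ → y₁ = y₂ := by
    intro K a w y₁ y₂ hy₁ hy₂ h1 h2
    simp only [hqdef] at h1 h2
    exact prox_unique F⁻¹ F hFinv Z hZcx K a w y₁ y₂ hy₁ hy₂ h1 h2
  -- step size
  set η : ℝ := ε * fs / G2 with hηdef
  have hηpos : 0 < η := div_pos (mul_pos hε hfspos) hG2pos
  refine ⟨η, hηpos, ?_⟩
  intro T traj hT h0 hZmem hmins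
  simp only [hq] at hmins hT
  simp only at hT ⊢
  rw [← hfs] at hT
  have hWnn : ∀ ξ : Fin (T+1) → Fin n, 0 ≤ ∏ s, prob (ξ s) :=
    fun ξ => Finset.prod_nonneg fun s _ => hpnn (ξ s)
  have hW1 : ∑ ξ : Fin (T+1) → Fin n, ∏ s, prob (ξ s) = 1 := by
    have h := Finset.prod_univ_sum (t := fun _ : Fin (T+1) => (univ : Finset (Fin n)))
      (f := fun _ i => prob i)
    simp only [hp1, Finset.prod_const_one, Fintype.piFinset_univ] at h
    rw [← h]
  -- the trajectory depends only on earlier coordinates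
  have hdep : ∀ m : ℕ, m ≤ T + 1 → ∀ ξ ξ' : Fin (T+1) → Fin n,
      (∀ s : Fin (T+1), (s:ℕ) < m → ξ s = ξ' s) → traj ξ m = traj ξ' m := by
    intro m
    induction m with
    | zero => intro _ ξ ξ' _; rw [h0, h0]
    | succ m ih =>
      intro hm ξ ξ' hagree
      have hmT : m < T + 1 := hm
      have hxm : traj ξ m = traj ξ' m :=
        ih (Nat.le_of_lt hmT) ξ ξ' (fun s hs => hagree s (Nat.lt_succ_of_lt hs))
      have hξt : ξ ⟨m, hmT⟩ = ξ' ⟨m, hmT⟩ := hagree ⟨m, hmT⟩ (Nat.lt_succ_self m)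
      have h1 := hmins ξ ⟨m, hmT⟩
      have h2 := hmins ξ' ⟨m, hmT⟩
      simp only at h1 h2
      rw [hξt, hxm] at h1
      exact huniq _ _ _ _ _ (hZmem ξ (m+1)) (hZmem ξ' (m+1)) h1 h2
  -- single step inequality
  have step1 : ∀ (ξ : Fin (T+1) → Fin n) (t : Fin (T+1)),
      (η * (sgn (A (ξ t) ⬝ᵥ traj ξ t.1 - b (ξ t)) / prob (ξ t)))
          * (A (ξ t) ⬝ᵥ (traj ξ t.1 - xstar))
        ≤ ((1/2) * q (traj ξ t.1 - xstar) - (1/2) * q (traj ξ (t.1+1) - xstar))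
          + (1/2) * (η * (sgn (A (ξ t) ⬝ᵥ traj ξ t.1 - b (ξ t)) / prob (ξ t)))^2
            * X (ξ t) := by
    intro ξ t
    set K : ℝ := η * (sgn (A (ξ t) ⬝ᵥ traj ξ t.1 - b (ξ t)) / prob (ξ t)) with hKdef
    set w : Fin d → ℝ := traj ξ t.1 with hwdef
    set y : Fin d → ℝ := traj ξ (t.1+1) with hydef
    have h1 : K * (A (ξ t) ⬝ᵥ y) - K * (A (ξ t) ⬝ᵥ xstar)
        ≤ (1/2)*q (w - xstar) - (1/2)*q (y - xstar) - (1/2)*q (w - y) :=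
      hprox K (A (ξ t)) w y xstar (hZmem ξ (t.1+1)) hxstarZ (hmins ξ t)
    have hdot : A (ξ t) ⬝ᵥ (w - y) = (A (ξ t) ᵥ* F) ⬝ᵥ (F⁻¹ *ᵥ (w - y)) := by
      conv_lhs => rw [← hFinv (w - y)]
      rw [Matrix.dotProduct_mulVec]
    have hcs : K * (A (ξ t) ⬝ᵥ (w - y))
        ≤ (1/2) * q (w - y) + (1/2) * K^2 * X (ξ t) := by
      rw [hdot]
      have h2 : K * ((A (ξ t) ᵥ* F) ⬝ᵥ (F⁻¹ *ᵥ (w - y)))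
          = (K • (A (ξ t) ᵥ* F)) ⬝ᵥ (F⁻¹ *ᵥ (w - y)) := by
        rw [smul_dotProduct, smul_eq_mul]
      rw [h2]
      refine le_trans (dot_le_half _ _) ?_
      have h3 : (K • (A (ξ t) ᵥ* F)) ⬝ᵥ (K • (A (ξ t) ᵥ* F)) = K^2 * X (ξ t) := by
        rw [smul_dotProduct, dotProduct_smul, smul_eq_mul, smul_eq_mul]
        have : (A (ξ t) ᵥ* F) ⬝ᵥ (A (ξ t) ᵥ* F) = X (ξ t) := rfl
        rw [this]; ring
      rw [h3]
      have h4 : (F⁻¹ *ᵥ (w - y)) ⬝ᵥ (F⁻¹ *ᵥ (w - y)) = q (w - y) := rfl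
      rw [h4]
      linarith
    have hsplit : A (ξ t) ⬝ᵥ (w - xstar)
        = A (ξ t) ⬝ᵥ (w - y) + (A (ξ t) ⬝ᵥ y - A (ξ t) ⬝ᵥ xstar) := by
      rw [dotProduct_sub, dotProduct_sub]; ring
    have h6 : K * (A (ξ t) ⬝ᵥ (w - xstar))
        = K * (A (ξ t) ⬝ᵥ (w - y)) + (K * (A (ξ t) ⬝ᵥ y) - K * (A (ξ t) ⬝ᵥ xstar)) := by
      rw [hsplit]; ring
    rw [h6]
    linarith
  -- telescoped over one epoch
  have step2 : ∀ ξ : Fin (T+1) → Fin n,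
      ∑ t : Fin (T+1), (η * (sgn (A (ξ t) ⬝ᵥ traj ξ t.1 - b (ξ t)) / prob (ξ t)))
          * (A (ξ t) ⬝ᵥ (traj ξ t.1 - xstar))
        ≤ (1/2) * q (x0 - xstar)
          + ∑ t : Fin (T+1), (1/2) * (η * (sgn (A (ξ t) ⬝ᵥ traj ξ t.1 - b (ξ t))
              / prob (ξ t)))^2 * X (ξ t) := by
    intro ξ
    have hsum := Finset.sum_le_sum (fun t (_ : t ∈ univ) => step1 ξ t)
    rw [Finset.sum_add_distrib] at hsum
    have htel : ∑ t : Fin (T+1),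
        ((1/2) * q (traj ξ t.1 - xstar) - (1/2) * q (traj ξ (t.1+1) - xstar))
        = (1/2) * q (traj ξ 0 - xstar) - (1/2) * q (traj ξ (T+1) - xstar) := by
      rw [Fin.sum_univ_eq_sum_range
        (fun m => (1/2) * q (traj ξ m - xstar) - (1/2) * q (traj ξ (m+1) - xstar)) (T+1)]
      exact Finset.sum_range_sub' (fun m => (1/2) * q (traj ξ m - xstar)) (T+1)
    rw [htel, h0 ξ] at hsum
    have hlast := hqnn (traj ξ (T+1) - xstar)
    linarith
  -- expectation of the noise term
  have step5 : ∀ t : Fin (T+1),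
      ∑ ξ : Fin (T+1) → Fin n, (∏ s, prob (ξ s))
          * ((1/2) * (η * (sgn (A (ξ t) ⬝ᵥ traj ξ t.1 - b (ξ t)) / prob (ξ t)))^2
            * X (ξ t))
        ≤ η^2 * G2 / 2 := by
    intro t
    set G : (Fin (T+1) → Fin n) → Fin n → ℝ := fun ξ i =>
      (sgn (A i ⬝ᵥ traj ξ t.1 - b i) / prob i)^2 * X i with hGdef
    have hGdep : ∀ ξ i, G (Function.update ξ t i) = G ξ := by
      intro ξ i
      have htr : traj (Function.update ξ t i) t.1 = traj ξ t.1 :=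
        hdep t.1 (le_of_lt t.isLt) _ _ (fun s hs =>
          Function.update_of_ne (Fin.ne_of_val_ne (Nat.ne_of_lt hs)) _ _)
      simp only [hGdef, htr]
    have hce := cond_exp prob hp1 t G hGdep
    have hrw : ∀ ξ : Fin (T+1) → Fin n, (∏ s, prob (ξ s))
        * ((1/2) * (η * (sgn (A (ξ t) ⬝ᵥ traj ξ t.1 - b (ξ t)) / prob (ξ t)))^2
          * X (ξ t))
        = (η^2/2) * ((∏ s, prob (ξ s)) * G ξ (ξ t)) := by
      intro ξ; simp only [hGdef]; ring
    simp only [hrw]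
    rw [← Finset.mul_sum, hce]
    have hpt : ∀ ξ : Fin (T+1) → Fin n, ∑ i, prob i * G ξ i ≤ G2 := by
      intro ξ
      rw [hG2def]
      refine Finset.sum_le_sum fun i _ => ?_
      simp only [hGdef]
      rcases eq_or_ne (prob i) 0 with h | h
      · rw [h]; simp
      · have hpos : 0 < prob i := lt_of_le_of_ne (hpnn i) (Ne.symm h)
        have hs2 : (sgn (A i ⬝ᵥ traj ξ t.1 - b i))^2 ≤ 1 := by
          have h1 := hsgn_abs (A i ⬝ᵥ traj ξ t.1 - b i)
          nlinarith [abs_nonneg (sgn (A i ⬝ᵥ traj ξ t.1 - b i)),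
            sq_abs (sgn (A i ⬝ᵥ traj ξ t.1 - b i))]
        have heq : prob i * ((sgn (A i ⬝ᵥ traj ξ t.1 - b i) / prob i)^2 * X i)
            = (sgn (A i ⬝ᵥ traj ξ t.1 - b i))^2 * X i / prob i := by
          field_simp
        rw [heq, div_le_div_iff_of_pos_right hpos]
        nlinarith [hXnn i]
    calc (η^2/2) * ∑ ξ : Fin (T+1) → Fin n, (∏ s, prob (ξ s)) * ∑ i, prob i * G ξ i
        ≤ (η^2/2) * ∑ ξ : Fin (T+1) → Fin n, (∏ s, prob (ξ s)) * G2 := by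
          refine mul_le_mul_of_nonneg_left
            (Finset.sum_le_sum fun ξ _ => mul_le_mul_of_nonneg_left (hpt ξ) (hWnn ξ))
            (by positivity)
      _ = η^2 * G2 / 2 := by rw [← Finset.sum_mul, hW1, one_mul]; ring
  -- expectation of the progress term
  have step6 : ∀ t : Fin (T+1),
      η * ((∑ ξ : Fin (T+1) → Fin n, (∏ s, prob (ξ s)) * l1Norm (A *ᵥ traj ξ t.1 - b)) - fs)
        ≤ ∑ ξ : Fin (T+1) → Fin n, (∏ s, prob (ξ s))
            * ((η * (sgn (A (ξ t) ⬝ᵥ traj ξ t.1 - b (ξ t)) / prob (ξ t)))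
              * (A (ξ t) ⬝ᵥ (traj ξ t.1 - xstar))) := by
    intro t
    set G : (Fin (T+1) → Fin n) → Fin n → ℝ := fun ξ i =>
      (sgn (A i ⬝ᵥ traj ξ t.1 - b i) / prob i) * (A i ⬝ᵥ (traj ξ t.1 - xstar)) with hGdef
    have hGdep : ∀ ξ i, G (Function.update ξ t i) = G ξ := by
      intro ξ i
      have htr : traj (Function.update ξ t i) t.1 = traj ξ t.1 :=
        hdep t.1 (le_of_lt t.isLt) _ _ (fun s hs =>
          Function.update_of_ne (Fin.ne_of_val_ne (Nat.ne_of_lt hs)) _ _)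
      simp only [hGdef, htr]
    have hce := cond_exp prob hp1 t G hGdep
    have hrhs : ∀ ξ : Fin (T+1) → Fin n,
        (∏ s, prob (ξ s)) * ((η * (sgn (A (ξ t) ⬝ᵥ traj ξ t.1 - b (ξ t)) / prob (ξ t)))
            * (A (ξ t) ⬝ᵥ (traj ξ t.1 - xstar)))
          = η * ((∏ s, prob (ξ s)) * G ξ (ξ t)) := by
      intro ξ; simp only [hGdef]; ring
    simp only [hrhs]
    rw [← Finset.mul_sum, hce]
    have hpt : ∀ ξ : Fin (T+1) → Fin n,
        l1Norm (A *ᵥ traj ξ t.1 - b) - fs ≤ ∑ i, prob i * G ξ i := by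
      intro ξ
      have heq : ∑ i, prob i * G ξ i
          = ∑ i, sgn (A i ⬝ᵥ traj ξ t.1 - b i) * (A i ⬝ᵥ (traj ξ t.1 - xstar)) := by
        refine Finset.sum_congr rfl fun i _ => ?_
        simp only [hGdef]
        rcases eq_or_ne (prob i) 0 with h | h
        · rw [h, hrowzero i h]
          simp
        · field_simp
      rw [heq]
      exact hsub (traj ξ t.1)
    have hmono : ∑ ξ : Fin (T+1) → Fin n,
          (∏ s, prob (ξ s)) * (l1Norm (A *ᵥ traj ξ t.1 - b) - fs)
        ≤ ∑ ξ : Fin (T+1) → Fin n, (∏ s, prob (ξ s)) * ∑ i, prob i * G ξ i :=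
      Finset.sum_le_sum fun ξ _ => mul_le_mul_of_nonneg_left (hpt ξ) (hWnn ξ)
    have hlhs : ∑ ξ : Fin (T+1) → Fin n,
          (∏ s, prob (ξ s)) * (l1Norm (A *ᵥ traj ξ t.1 - b) - fs)
        = (∑ ξ : Fin (T+1) → Fin n, (∏ s, prob (ξ s)) * l1Norm (A *ᵥ traj ξ t.1 - b))
            - fs := by
      simp only [mul_sub]
      rw [Finset.sum_sub_distrib, ← Finset.sum_mul, hW1, one_mul]
    rw [hlhs] at hmono
    exact mul_le_mul_of_nonneg_left hmono hηpos.le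
  -- total bound over the epoch
  have hTotal : ∑ t : Fin (T+1),
      η * ((∑ ξ : Fin (T+1) → Fin n, (∏ s, prob (ξ s)) * l1Norm (A *ᵥ traj ξ t.1 - b)) - fs)
      ≤ (1/2) * q (x0 - xstar) + ((T:ℝ)+1) * (η^2 * G2 / 2) := by
    calc ∑ t : Fin (T+1),
        η * ((∑ ξ : Fin (T+1) → Fin n, (∏ s, prob (ξ s)) * l1Norm (A *ᵥ traj ξ t.1 - b)) - fs)
        ≤ ∑ t : Fin (T+1), ∑ ξ : Fin (T+1) → Fin n, (∏ s, prob (ξ s))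
            * ((η * (sgn (A (ξ t) ⬝ᵥ traj ξ t.1 - b (ξ t)) / prob (ξ t)))
              * (A (ξ t) ⬝ᵥ (traj ξ t.1 - xstar))) :=
          Finset.sum_le_sum fun t _ => step6 t
      _ = ∑ ξ : Fin (T+1) → Fin n, (∏ s, prob (ξ s))
            * ∑ t : Fin (T+1), ((η * (sgn (A (ξ t) ⬝ᵥ traj ξ t.1 - b (ξ t)) / prob (ξ t)))
              * (A (ξ t) ⬝ᵥ (traj ξ t.1 - xstar))) := by
          rw [Finset.sum_comm]
          exact Finset.sum_congr rfl fun ξ _ => (Finset.mul_sum _ _ _).symm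
      _ ≤ ∑ ξ : Fin (T+1) → Fin n, (∏ s, prob (ξ s))
            * ((1/2) * q (x0 - xstar)
              + ∑ t : Fin (T+1), (1/2) * (η * (sgn (A (ξ t) ⬝ᵥ traj ξ t.1 - b (ξ t))
                  / prob (ξ t)))^2 * X (ξ t)) :=
          Finset.sum_le_sum fun ξ _ => mul_le_mul_of_nonneg_left (step2 ξ) (hWnn ξ)
      _ = (1/2) * q (x0 - xstar)
          + ∑ t : Fin (T+1), ∑ ξ : Fin (T+1) → Fin n, (∏ s, prob (ξ s))
              * ((1/2) * (η * (sgn (A (ξ t) ⬝ᵥ traj ξ t.1 - b (ξ t)) / prob (ξ t)))^2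
                * X (ξ t)) := by
          simp only [mul_add, Finset.mul_sum]
          rw [Finset.sum_add_distrib, ← Finset.sum_mul, hW1, one_mul, Finset.sum_comm]
      _ ≤ (1/2) * q (x0 - xstar) + ∑ t : Fin (T+1), η^2 * G2 / 2 := by
          have h := Finset.sum_le_sum fun (t : Fin (T+1)) (_ : t ∈ univ) => step5 t
          linarith
      _ = (1/2) * q (x0 - xstar) + ((T:ℝ)+1) * (η^2 * G2 / 2) := by
          rw [Finset.sum_const, Finset.card_univ, Fintype.card_fin, nsmul_eq_mul]
          push_cast
          ring
  have hT1pos : (0:ℝ) < (T:ℝ) + 1 := by positivity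
  have hTot2 : η * ((∑ m ∈ Finset.range (T+1), ∑ ξ : Fin (T+1) → Fin n,
        (∏ s, prob (ξ s)) * l1Norm (A *ᵥ traj ξ m - b)) - ((T:ℝ)+1) * fs)
      ≤ (1/2) * q (x0 - xstar) + ((T:ℝ)+1) * (η^2 * G2 / 2) := by
    have h1 : ∑ t : Fin (T+1),
        η * ((∑ ξ : Fin (T+1) → Fin n, (∏ s, prob (ξ s)) * l1Norm (A *ᵥ traj ξ t.1 - b)) - fs)
        = ∑ m ∈ Finset.range (T+1),
            η * ((∑ ξ : Fin (T+1) → Fin n, (∏ s, prob (ξ s)) * l1Norm (A *ᵥ traj ξ m - b))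
              - fs) :=
      Fin.sum_univ_eq_sum_range (fun m => η * ((∑ ξ : Fin (T+1) → Fin n,
        (∏ s, prob (ξ s)) * l1Norm (A *ᵥ traj ξ m - b)) - fs)) (T+1)
    have h2 : ∑ m ∈ Finset.range (T+1),
        η * ((∑ ξ : Fin (T+1) → Fin n, (∏ s, prob (ξ s)) * l1Norm (A *ᵥ traj ξ m - b)) - fs)
        = η * ((∑ m ∈ Finset.range (T+1), ∑ ξ : Fin (T+1) → Fin n,
            (∏ s, prob (ξ s)) * l1Norm (A *ᵥ traj ξ m - b)) - ((T:ℝ)+1) * fs) := by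
      simp only [mul_sub]
      rw [Finset.sum_sub_distrib, ← Finset.mul_sum, Finset.sum_const, Finset.card_range,
        nsmul_eq_mul]
      push_cast
      ring
    rw [h1, h2] at hTotal
    exact hTotal
  -- Jensen step
  have hmean : ∀ ξ : Fin (T+1) → Fin n,
      l1Norm (A *ᵥ (((T:ℝ)+1)⁻¹ • ∑ t ∈ Finset.range (T+1), traj ξ t) - b)
        ≤ ((T:ℝ)+1)⁻¹ * ∑ m ∈ Finset.range (T+1), l1Norm (A *ᵥ traj ξ m - b) := by
    intro ξ
    have hrwv : A *ᵥ (((T:ℝ)+1)⁻¹ • ∑ t ∈ Finset.range (T+1), traj ξ t) - b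
        = ∑ m ∈ Finset.range (T+1), ((T:ℝ)+1)⁻¹ • (A *ᵥ traj ξ m - b) := by
      rw [Matrix.mulVec_smul]
      rw [show A *ᵥ (∑ t ∈ Finset.range (T+1), traj ξ t)
          = ∑ t ∈ Finset.range (T+1), A *ᵥ traj ξ t from map_sum A.mulVecLin _ _]
      funext j
      simp only [Pi.sub_apply, Pi.smul_apply, Finset.sum_apply, smul_eq_mul, mul_sub]
      rw [Finset.sum_sub_distrib, Finset.sum_const, Finset.card_range, ← Finset.mul_sum,
        nsmul_eq_mul]
      field_simp
      push_cast
      ring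
    rw [hrwv]
    refine le_trans (l1Norm_sum_le _ _) ?_
    rw [Finset.mul_sum]
    refine le_of_eq (Finset.sum_congr rfl fun m _ => ?_)
    rw [l1Norm_smul, abs_of_nonneg (by positivity : (0:ℝ) ≤ ((T:ℝ)+1)⁻¹)]
  have hEfin : (∑ ξ : Fin (T+1) → Fin n, (∏ s, prob (ξ s))
        * l1Norm (A *ᵥ (((T:ℝ)+1)⁻¹ • ∑ t ∈ Finset.range (T+1), traj ξ t) - b))
      ≤ ((T:ℝ)+1)⁻¹ * ∑ m ∈ Finset.range (T+1), ∑ ξ : Fin (T+1) → Fin n,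
          (∏ s, prob (ξ s)) * l1Norm (A *ᵥ traj ξ m - b) := by
    refine le_trans (Finset.sum_le_sum fun ξ (_ : ξ ∈ univ) =>
      mul_le_mul_of_nonneg_left (hmean ξ) (hWnn ξ)) ?_
    have h8 : ∀ ξ : Fin (T+1) → Fin n,
        (∏ s, prob (ξ s)) * (((T:ℝ)+1)⁻¹ * ∑ m ∈ Finset.range (T+1),
          l1Norm (A *ᵥ traj ξ m - b))
        = ∑ m ∈ Finset.range (T+1),
            ((T:ℝ)+1)⁻¹ * ((∏ s, prob (ξ s)) * l1Norm (A *ᵥ traj ξ m - b)) := by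
      intro ξ
      rw [Finset.mul_sum, Finset.mul_sum]
      exact Finset.sum_congr rfl fun m _ => by ring
    simp only [h8]
    rw [Finset.sum_comm, Finset.mul_sum]
    exact le_of_eq (Finset.sum_congr rfl fun m _ => (Finset.mul_sum _ _ _).symm)
  -- numeric endgame
  have hq0eq : q (x0 - xstar) = q (xstar - x0) := by
    rw [← hqneg (xstar - x0), neg_sub]
  have hεsq : (0:ℝ) < ε^2 := by positivity
  have hCg : (d:ℝ) * (α * β)^2 * (NRF * NRFi)^2 * ((1+γ)/(1-γ))^2
      * (q (xstar - x0) / q xstar) * (l1Norm (A *ᵥ xstar) / fs)^2 ≤ (T:ℝ) * ε^2 :=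
    (div_le_iff₀ hεsq).mp hT
  have hq0G2 : q (x0 - xstar) * G2 ≤ ε^2 * fs^2 * ((T:ℝ)+1) := by
    rw [hq0eq]
    calc q (xstar - x0) * G2
        ≤ ((d:ℝ) * (α * β)^2 * (NRF * NRFi)^2 * ((1+γ)/(1-γ))^2
            * (q (xstar - x0) / q xstar) * (l1Norm (A *ᵥ xstar) / fs)^2) * fs^2 := hkey
      _ ≤ (T:ℝ) * ε^2 * fs^2 := mul_le_mul_of_nonneg_right hCg (sq_nonneg fs)
      _ ≤ ε^2 * fs^2 * ((T:ℝ)+1) := by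
          have hdiff : ε^2 * fs^2 * ((T:ℝ)+1) - (T:ℝ) * ε^2 * fs^2 = (ε*fs)^2 := by ring
          linarith [sq_nonneg (ε*fs), hdiff]
  have hbound2 : q (x0 - xstar) / (2*η*((T:ℝ)+1)) ≤ ε * fs / 2 := by
    rw [div_le_iff₀ (by positivity)]
    have h5 : q (x0 - xstar) ≤ ε^2*fs^2*((T:ℝ)+1)/G2 := (le_div_iff₀ hG2pos).mpr hq0G2
    have h6 : ε * fs / 2 * (2*η*((T:ℝ)+1)) = ε^2*fs^2*((T:ℝ)+1)/G2 := by
      rw [hηdef]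
      field_simp
    rw [h6]
    exact h5
  have hηG2 : η * G2 = ε * fs := by
    rw [hηdef]
    exact div_mul_cancel₀ _ (ne_of_gt hG2pos)
  rw [div_le_iff₀ hfspos]
  have hB : ((1/2) * q (x0 - xstar) + ((T:ℝ)+1) * (η^2 * G2 / 2)) / η
      = q (x0 - xstar)/(2*η) + ((T:ℝ)+1) * (η*G2)/2 := by
    field_simp
  have hsum_le : (∑ m ∈ Finset.range (T+1), ∑ ξ : Fin (T+1) → Fin n,
        (∏ s, prob (ξ s)) * l1Norm (A *ᵥ traj ξ m - b)) - ((T:ℝ)+1)*fs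
      ≤ ((1/2) * q (x0 - xstar) + ((T:ℝ)+1) * (η^2 * G2 / 2)) / η := by
    rw [le_div_iff₀ hηpos, mul_comm]
    exact hTot2
  rw [hB] at hsum_le
  have hchain : (∑ ξ : Fin (T+1) → Fin n, (∏ s, prob (ξ s))
        * l1Norm (A *ᵥ (((T:ℝ)+1)⁻¹ • ∑ t ∈ Finset.range (T+1), traj ξ t) - b))
      ≤ fs + ε*fs := by
    refine le_trans hEfin ?_
    have h7 : (∑ m ∈ Finset.range (T+1), ∑ ξ : Fin (T+1) → Fin n,
          (∏ s, prob (ξ s)) * l1Norm (A *ᵥ traj ξ m - b))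
        ≤ ((T:ℝ)+1)*fs + (q (x0 - xstar)/(2*η) + ((T:ℝ)+1) * (η*G2)/2) := by
      linarith
    calc ((T:ℝ)+1)⁻¹ * ∑ m ∈ Finset.range (T+1), ∑ ξ : Fin (T+1) → Fin n,
          (∏ s, prob (ξ s)) * l1Norm (A *ᵥ traj ξ m - b)
        ≤ ((T:ℝ)+1)⁻¹ * (((T:ℝ)+1)*fs
            + (q (x0 - xstar)/(2*η) + ((T:ℝ)+1) * (η*G2)/2)) :=
          mul_le_mul_of_nonneg_left h7 (by positivity)
      _ = fs + (q (x0 - xstar)/(2*η*((T:ℝ)+1)) + (η*G2)/2) := by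
          field_simp
      _ ≤ fs + (ε*fs/2 + ε*fs/2) := by
          rw [hηG2]
          linarith [hbound2]
      _ = fs + ε*fs := by ring
  linarith [hchain]
end

section
/- Let Ā ∈ ℝ^{n×(d+1)}, let U ∈ ℝ^{n×k} be an (α,β,p)-conditioned matrix with Ā = UR for some R ∈ ℝ^{k×(d+1)}, and let C = {x ∈ ℝ^{d+1} : x_{d+1} = −1}. For i ∈ {1,…,n} let f_i(x) = |Ā_i x|^p, let λ_i = ‖U_i‖_p^p, define the sensitivity s_i = n · sup { f_i(x)/Σ_{j=1}^n f_j(x) : x ∈ C, Āx ≠ 0 }, and m(f_i) = ⌊s_i⌋ + 1. Then for every i, m(f_i) ≤ nβ^p λ_i + 1, and the total sensitivity satisfies M(F) = Σ_{i=1}^n m(f_i) ≤ n((αβ)^p + 1). -/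
open Matrix Finset

/-- The entrywise `ℓ_p` norm of a vector: `‖v‖_p = (∑ i, |v i|^p)^(1/p)`. -/
noncomputable def vecLpNorm (p : ℝ) {m : ℕ} (v : Fin m → ℝ) : ℝ :=
  (∑ i, |v i| ^ p) ^ (1 / p)

/-- The norm dual to the `ℓ_p` norm, i.e. the `ℓ_q` norm with `1/p + 1/q = 1`
(the `ℓ_∞` norm when `p = 1`). -/
noncomputable def vecDualNorm (p : ℝ) {m : ℕ} (v : Fin m → ℝ) : ℝ :=
  if p = 1 then ⨆ i, |v i| else vecLpNorm (p / (p - 1)) v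

/-- The entrywise `ℓ_p` norm of a matrix: `|M|_p = (∑ i j, |M i j|^p)^(1/p)`. -/
noncomputable def matEntryLpNorm (p : ℝ) {m k : ℕ} (M : Matrix (Fin m) (Fin k) ℝ) : ℝ :=
  (∑ i, ∑ j, |M i j| ^ p) ^ (1 / p)

/-- `U` is `(α, β, p)`-conditioned if `|U|_p ≤ α` and `‖x‖_q ≤ β ‖U x‖_p` for all `x`,
where `q` is the conjugate exponent of `p` (the constant `β` being nonnegative). -/
def IsConditioned (p : ℝ) {m k : ℕ} (α β : ℝ) (U : Matrix (Fin m) (Fin k) ℝ) : Prop :=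
  0 ≤ β ∧ matEntryLpNorm p U ≤ α ∧
    ∀ x : Fin k → ℝ, vecDualNorm p x ≤ β * vecLpNorm p (U *ᵥ x)

/-!
Write `Ā = U R` and `y = R x`, so that `Ā x = U y`. Hölder's inequality and the conditioning of
`U` give `|U_i y| ≤ ‖U_i‖_p ‖y‖_q ≤ ‖U_i‖_p β ‖U y‖_p`, i.e. `f_i(x) ≤ β^p λ_i ∑_j f_j(x)`.
Hence `s_i ≤ n β^p λ_i`, and summing over `i` with `∑_i λ_i = |U|_p^p ≤ α^p` bounds the total.
-/

theorem vecLpNorm_nonneg (p : ℝ) {m : ℕ} (v : Fin m → ℝ) : 0 ≤ vecLpNorm p v := by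
  unfold vecLpNorm
  positivity

theorem vecLpNorm_rpow {p : ℝ} (hp : 0 < p) {m : ℕ} (v : Fin m → ℝ) :
    vecLpNorm p v ^ p = ∑ i, |v i| ^ p := by
  rw [vecLpNorm, ← Real.rpow_mul (by positivity), one_div_mul_cancel hp.ne', Real.rpow_one]

theorem matEntryLpNorm_rpow {p : ℝ} (hp : 0 < p) {m k : ℕ} (M : Matrix (Fin m) (Fin k) ℝ) :
    matEntryLpNorm p M ^ p = ∑ i, ∑ j, |M i j| ^ p := by
  rw [matEntryLpNorm, ← Real.rpow_mul (by positivity), one_div_mul_cancel hp.ne', Real.rpow_one]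

theorem abs_dotProduct_le_vecLpNorm_mul_vecDualNorm {p : ℝ} (hp : 1 ≤ p) {m : ℕ}
    (v y : Fin m → ℝ) : |v ⬝ᵥ y| ≤ vecLpNorm p v * vecDualNorm p y := by
  have habs : |v ⬝ᵥ y| ≤ ∑ j, |v j| * |y j| := by
    simpa only [dotProduct, abs_mul] using abs_sum_le_sum_abs (fun j => v j * y j) univ
  refine habs.trans ?_
  rcases hp.eq_or_lt with rfl | hp
  · have hsup : ∀ j, |y j| ≤ ⨆ i, |y i| := le_ciSup (Set.finite_range _).bddAbove
    calc ∑ j, |v j| * |y j| ≤ ∑ j, |v j| * ⨆ i, |y i| := by gcongr with j; exact hsup j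
      _ = vecLpNorm 1 v * vecDualNorm 1 y := by simp [vecLpNorm, vecDualNorm, sum_mul]
  · simpa only [vecDualNorm, if_neg hp.ne', vecLpNorm, Real.conjExponent, abs_abs] using
      Real.inner_le_Lp_mul_Lq univ (fun j => |v j|) (fun j => |y j|)
        (Real.HolderConjugate.conjExponent hp)

namespace IsConditioned

variable {p α β : ℝ} {m k : ℕ} {U : Matrix (Fin m) (Fin k) ℝ}

theorem alpha_nonneg (hU : IsConditioned p α β U) : 0 ≤ α :=
  (Real.rpow_nonneg (by positivity) _).trans hU.2.1

theorem sum_sum_rpow_le (hp : 0 < p) (hU : IsConditioned p α β U) :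
    ∑ i, ∑ j, |U i j| ^ p ≤ α ^ p := by
  rw [← matEntryLpNorm_rpow hp]
  exact Real.rpow_le_rpow (Real.rpow_nonneg (by positivity) _) hU.2.1 hp.le

theorem rpow_abs_mulVec_le (hp : 1 ≤ p) (hU : IsConditioned p α β U) (y : Fin k → ℝ) (i : Fin m) :
    |(U *ᵥ y) i| ^ p ≤ β ^ p * (∑ j, |U i j| ^ p) * ∑ j, |(U *ᵥ y) j| ^ p := by
  have hp0 : 0 < p := zero_lt_one.trans_le hp
  have hcoord : |(U *ᵥ y) i| ≤ vecLpNorm p (U i) * (β * vecLpNorm p (U *ᵥ y)) :=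
    (abs_dotProduct_le_vecLpNorm_mul_vecDualNorm hp (U i) y).trans
      (mul_le_mul_of_nonneg_left (hU.2.2 y) (vecLpNorm_nonneg p _))
  calc |(U *ᵥ y) i| ^ p ≤ (vecLpNorm p (U i) * (β * vecLpNorm p (U *ᵥ y))) ^ p := by gcongr
    _ = β ^ p * vecLpNorm p (U i) ^ p * vecLpNorm p (U *ᵥ y) ^ p := by
      rw [Real.mul_rpow (vecLpNorm_nonneg p _) (mul_nonneg hU.1 (vecLpNorm_nonneg p _)),
        Real.mul_rpow hU.1 (vecLpNorm_nonneg p _)]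
      ring
    _ = β ^ p * (∑ j, |U i j| ^ p) * ∑ j, |(U *ᵥ y) j| ^ p := by
      rw [vecLpNorm_rpow hp0, vecLpNorm_rpow hp0]

theorem rpow_abs_mulVec_div_sum_le (hp : 1 ≤ p) (hU : IsConditioned p α β U) (y : Fin k → ℝ)
    (i : Fin m) : |(U *ᵥ y) i| ^ p / ∑ j, |(U *ᵥ y) j| ^ p ≤ β ^ p * ∑ j, |U i j| ^ p :=
  div_le_of_le_mul₀ (by positivity) (mul_nonneg (Real.rpow_nonneg hU.1 p) (by positivity))
    (hU.rpow_abs_mulVec_le hp y i)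

end IsConditioned

theorem sensitivities_bounded_by_leverage_scores_general
    (n d k : ℕ) (p : ℝ) (hp : 1 ≤ p)
    (Abar : Matrix (Fin n) (Fin (d+1)) ℝ)
    (U : Matrix (Fin n) (Fin k) ℝ) (α β : ℝ) (hcond : IsConditioned p α β U)
    (R : Matrix (Fin k) (Fin (d+1)) ℝ) (hfact : Abar = U * R)
    (C : Set (Fin (d+1) → ℝ))
    (f : Fin n → (Fin (d+1) → ℝ) → ℝ) (hf : ∀ i x, f i x = |Abar i ⬝ᵥ x| ^ p)
    (lam : Fin n → ℝ) (hlam : ∀ i, lam i = ∑ j, |U i j| ^ p)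
    (s : Fin n → ℝ)
    (hs : ∀ i, s i = n * sSup {v | ∃ x ∈ C, Abar *ᵥ x ≠ 0 ∧ v = f i x / ∑ j, f j x}) :
    (∀ i, (⌊s i⌋ : ℝ) + 1 ≤ n * β ^ p * lam i + 1) ∧
    (∑ i, ((⌊s i⌋ : ℝ) + 1)) ≤ n * ((α * β) ^ p + 1) := by
  have hsens : ∀ i, s i ≤ n * β ^ p * lam i := by
    intro i
    rw [hs, mul_assoc]
    gcongr
    refine Real.sSup_le ?_ (mul_nonneg (Real.rpow_nonneg hcond.1 p) (by rw [hlam]; positivity))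
    rintro _ ⟨x, -, -, rfl⟩
    have hAx : ∀ j, Abar j ⬝ᵥ x = (U *ᵥ (R *ᵥ x)) j := fun j => by
      rw [mulVec_mulVec, ← hfact]; rfl
    simpa only [hf, hlam, hAx] using hcond.rpow_abs_mulVec_div_sum_le hp (R *ᵥ x) i
  have hfloor : ∀ i, (⌊s i⌋ : ℝ) + 1 ≤ n * β ^ p * lam i + 1 := fun i => by
    linarith [Int.floor_le (s i), hsens i]
  refine ⟨hfloor, ?_⟩
  have hlam_sum : ∑ i, lam i ≤ α ^ p := by
    simpa only [hlam] using hcond.sum_sum_rpow_le (zero_lt_one.trans_le hp)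
  calc ∑ i, ((⌊s i⌋ : ℝ) + 1) ≤ ∑ i, ((n : ℝ) * β ^ p * lam i + 1) := sum_le_sum fun i _ => hfloor i
    _ = n * β ^ p * ∑ i, lam i + n := by simp [sum_add_distrib, mul_sum]
    _ ≤ n * β ^ p * α ^ p + n := by gcongr; exact mul_nonneg n.cast_nonneg (Real.rpow_nonneg hcond.1 p)
    _ = n * ((α * β) ^ p + 1) := by rw [Real.mul_rpow hcond.alpha_nonneg hcond.1]; ring

theorem sensitivities_bounded_by_leverage_scores
    (n d k : ℕ) (p : ℝ) (hp : 1 ≤ p)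
    (Abar : Matrix (Fin n) (Fin (d+1)) ℝ)
    (U : Matrix (Fin n) (Fin k) ℝ) (α β : ℝ) (hcond : IsConditioned p α β U)
    (R : Matrix (Fin k) (Fin (d+1)) ℝ) (hfact : Abar = U * R)
    (C : Set (Fin (d+1) → ℝ)) (hC : C = {x | x (Fin.last d) = -1})
    (f : Fin n → (Fin (d+1) → ℝ) → ℝ) (hf : ∀ i x, f i x = |Abar i ⬝ᵥ x| ^ p)
    (lam : Fin n → ℝ) (hlam : ∀ i, lam i = ∑ j, |U i j| ^ p)
    (s : Fin n → ℝ)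
    (hs : ∀ i, s i = n * sSup {v | ∃ x ∈ C, Abar *ᵥ x ≠ 0 ∧ v = f i x / ∑ j, f j x}) :
    (∀ i, (⌊s i⌋ : ℝ) + 1 ≤ n * β ^ p * lam i + 1) ∧
    (∑ i, ((⌊s i⌋ : ℝ) + 1)) ≤ n * ((α * β) ^ p + 1) :=
  sensitivities_bounded_by_leverage_scores_general n d k p hp Abar U α β hcond R hfact C f hf lam
    hlam s hs
end
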